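/- Let M, M' ⊂ ℂᴺ be formal real hypersurfaces of m-infinite and m'-infinite type respectively, given in normal coordinates. Assume 1 < m' ≤ m and m < 2m' − 1. Then every formal holomorphic map H = (F,G) sending M into M' is either CR-transversal (G_w(0) ≠ 0) or satisfies G ≡ 0. -/

import Mathlib

noncomputable section
open MvPowerSeries Complex

instance {σ : Type*} : IsDomain (MvPowerSeries σ ℂ) := NoZeroDivisors.to_isDomain _

/-- total degree of a multi-index -/
def deg {σ : Type*} (d : σ →₀ ℕ) : ℕ := d.sum fun _ n => n

/-- substitution of formal power series (intended for substituted series with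
vanishing constant term, in which case each coefficient of the result is the
finite sum below) -/
def pssubst {σ τ : Type*} [Fintype σ] [DecidableEq σ] [Fintype τ] [DecidableEq τ]
    (a : σ → MvPowerSeries τ ℂ) (f : MvPowerSeries σ ℂ) : MvPowerSeries τ ℂ :=
  fun μ => ∑ d ∈ Finset.Iic (Finsupp.equivFunOnFinite.symm fun _ => deg μ),
    MvPowerSeries.coeff d f * MvPowerSeries.coeff μ (∏ i, (a i) ^ (d i))

/-- formal partial derivative ∂/∂X i -/
def pd {σ : Type*} [DecidableEq σ] (i : σ) (f : MvPowerSeries σ ℂ) : MvPowerSeries σ ℂ :=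
  fun d => ((d i : ℂ) + 1) * MvPowerSeries.coeff (d + Finsupp.single i 1) f

/-- the series with complex-conjugated coefficients -/
def psconj {σ : Type*} (f : MvPowerSeries σ ℂ) : MvPowerSeries σ ℂ :=
  MvPowerSeries.map (starRingEnd ℂ) f

/-- variables (z, w) of source/target space -/
abbrev Wv (n : ℕ) : Type := Fin n ⊕ Unit
/-- variables (z, χ, τ) for complexified defining equations -/
abbrev Vv (n : ℕ) : Type := Fin n ⊕ (Fin n ⊕ Unit)
/-- the variable τ -/
def tv (n : ℕ) : Vv n := Sum.inr (Sum.inr ())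

/-- substitution (z, w) ↦ (z, Q(z,χ,τ)) -/
def sLHS {n : ℕ} (Q : MvPowerSeries (Vv n) ℂ) : Wv n → MvPowerSeries (Vv n) ℂ
  | Sum.inl i => MvPowerSeries.X (Sum.inl i)
  | Sum.inr _ => Q

/-- substitution (z, w) ↦ (χ, τ) -/
def sBar {n : ℕ} : Wv n → MvPowerSeries (Vv n) ℂ
  | Sum.inl i => MvPowerSeries.X (Sum.inr (Sum.inl i))
  | Sum.inr _ => MvPowerSeries.X (Sum.inr (Sum.inr ()))

/-- the formal map H = (F, G) sends M = {w = Q(z,χ,τ)} into M' = {w' = Q'(z',χ',τ')}: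
G(z,Q(z,χ,τ)) = Q'(F(z,Q(z,χ,τ)), F̄(χ,τ), Ḡ(χ,τ)) -/
def SendsInto {n : ℕ} (Q Q' : MvPowerSeries (Vv n) ℂ)
    (F : Fin n → MvPowerSeries (Wv n) ℂ) (G : MvPowerSeries (Wv n) ℂ) : Prop :=
  pssubst (sLHS Q) G =
    pssubst (fun v => match v with
      | Sum.inl i => pssubst (sLHS Q) (F i)
      | Sum.inr (Sum.inl i) => pssubst sBar (psconj (F i))
      | Sum.inr (Sum.inr _) => pssubst sBar (psconj G)) Q'

/-!
Write `H = (F, G)` and let `s` be its transversal order, the order of `G(0, w)`. Along `χ = 0` the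
defining function `Q = τ + τ^m Q̃` reduces to `τ`, so the mapping equation
`G(z, Q) = Q'(F(z, Q), F̄(χ, τ), Ḡ(χ, τ))` recovers each coefficient `g_{αk}` of `G` from its
right-hand side. For `α ≠ 0` the term `Ḡ`, which is free of `z`, does not contribute, and every
monomial of `τ^{m'} Q̃'` becomes a multiple of some `F̄ⱼ Ḡ^{m'}`, which along `χ = 0` has
`τ`-order greater than `m' s`; hence `g_{αk} = 0` whenever `α ≠ 0` and `k ≤ m' s`. Comparing next
the coefficients of `z^α χ^β τ^{m+s-1}`, for a monomial `z^α χ^β` of `Q̃`, the left-hand side gives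
`s g_s q_{αβ} ≠ 0`, whereas the right-hand side vanishes if `m' s > m + s - 1`. So
`(m' - 1) s ≤ m - 1`, which for `m < 2m' - 1` leaves only `s = 1`. If `G(0, w) ≡ 0`, the first
step alone gives `G ≡ 0`.
-/

open Finsupp (weight)

section Coefficients

variable {σ τ R : Type*} [CommSemiring R]

lemma weight_eq_sum [Fintype σ] (w : σ → ℕ) (d : σ →₀ ℕ) : weight w d = ∑ i, d i * w i := by
  rw [Finsupp.weight_apply, Finsupp.sum_fintype _ _ (by simp)]
  rfl

lemma weight_mapDomain (φ : σ → τ) (ω : τ → ℕ) (d : σ →₀ ℕ) :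
    weight ω (d.mapDomain φ) = weight (ω ∘ φ) d := by
  simp only [Finsupp.weight_apply]
  rw [Finsupp.sum_mapDomain_index (by simp) (by simp [add_mul])]
  rfl

lemma coeff_prod_pow_eq_zero_of_weight_lt [Fintype σ] {a : σ → MvPowerSeries τ R}
    (ω : τ → ℕ) (b : σ → ℕ) (ha : ∀ i, (b i : ℕ∞) ≤ (a i).weightedOrder ω) {d : σ →₀ ℕ}
    {μ : τ →₀ ℕ} (h : weight ω μ < weight b d) : coeff μ (∏ i, a i ^ d i) = 0 := by
  apply coeff_eq_zero_of_lt_weightedOrder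
  calc (weight ω μ : ℕ∞) < ∑ i, ((d i * b i : ℕ) : ℕ∞) := by
        rw [← Nat.cast_sum, ← weight_eq_sum]
        exact_mod_cast h
    _ ≤ ∑ i, (a i ^ d i).weightedOrder ω := by
        gcongr with i
        calc ((d i * b i : ℕ) : ℕ∞) = d i • (b i : ℕ∞) := by simp
          _ ≤ d i • (a i).weightedOrder ω := by gcongr; exact ha i
          _ ≤ _ := le_weightedOrder_pow ω (d i)
    _ ≤ _ := le_weightedOrder_prod ω _ _

lemma prod_X_comp_pow [Fintype σ] (φ : σ → τ) (d : σ →₀ ℕ) :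
    ∏ i, (X (φ i) : MvPowerSeries τ R) ^ d i = monomial (d.mapDomain φ) 1 := by
  simp_rw [X_pow_eq]
  rw [prod_monomial, Finset.prod_const_one, Finsupp.mapDomain, Finsupp.sum_fintype _ _ (by simp)]

lemma exists_one_add_pow_eq (P : R) (j : ℕ) : ∃ c, (1 + P) ^ j = 1 + j * P + P ^ 2 * c := by
  induction j with
  | zero => exact ⟨0, by simp⟩
  | succ j ih =>
    obtain ⟨c, hc⟩ := ih
    exact ⟨j + c * (1 + P), by rw [pow_succ, hc]; push_cast; ring⟩

/-- In `(t + t^m Q)^j = t^j (1 + t^{m-1} Q)^j`, all terms beyond `t^j + j t^{j+m-1} Q` have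
`t`-degree above `m + s - 1`. -/
lemma coeff_X_add_X_pow_mul_pow [DecidableEq σ] (t : σ) (Q : MvPowerSeries σ R) {m s j : ℕ}
    (hm : 2 ≤ m) (hsj : s ≤ j) {d₀ : σ →₀ ℕ} (hd₀ : d₀ ≠ 0) (hd₀t : d₀ t = 0) :
    coeff (d₀ + Finsupp.single t (m + s - 1)) ((X t + X t ^ m * Q) ^ j)
      = if j = s then s * coeff d₀ Q else 0 := by
  obtain ⟨c, hc⟩ := exists_one_add_pow_eq (X t ^ (m - 1) * Q) j
  have hexpand : (X t + X t ^ m * Q) ^ j = X t ^ j * 1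
      + X t ^ (j + (m - 1)) * ((j : MvPowerSeries σ R) * Q)
      + X t ^ (j + 2 * (m - 1)) * (Q ^ 2 * c) := by
    have hX : X t + X t ^ m * Q = X t * (1 + X t ^ (m - 1) * Q) := by
      rw [mul_add, mul_one, ← mul_assoc, ← pow_succ', Nat.sub_add_cancel (by omega)]
    rw [hX, mul_pow, hc]
    ring
  have hcoeff (k : ℕ) (f : MvPowerSeries σ R) :
      coeff (d₀ + Finsupp.single t (m + s - 1)) (X t ^ k * f)
        = if k ≤ m + s - 1 then coeff (d₀ + Finsupp.single t (m + s - 1 - k)) f else 0 := by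
    rw [X_pow_eq, coeff_monomial_mul, one_mul]
    by_cases hk : k ≤ m + s - 1
    · have hsplit : d₀ + Finsupp.single t (m + s - 1)
          = d₀ + Finsupp.single t (m + s - 1 - k) + Finsupp.single t k := by
        rw [add_assoc, ← Finsupp.single_add, Nat.sub_add_cancel hk]
      rw [if_pos hk, hsplit, if_pos le_add_self, add_tsub_cancel_right]
    · rw [if_neg hk, if_neg]
      simpa [Finsupp.single_le_iff, hd₀t] using hk
  have hne (e : σ →₀ ℕ) : d₀ + e ≠ 0 := fun h => hd₀ (add_eq_zero.mp h).1
  have hj : ¬ j + 2 * (m - 1) ≤ m + s - 1 := by omega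
  rw [hexpand, map_add, map_add, hcoeff, hcoeff, hcoeff, if_neg hj, coeff_one, if_neg (hne _),
    ← map_natCast (C (σ := σ)), coeff_C_mul, ite_self, zero_add, add_zero]
  by_cases hjs : j = s
  · subst hjs
    rw [if_pos (by omega), if_pos rfl, show m + j - 1 - (j + (m - 1)) = 0 by omega,
      Finsupp.single_zero, add_zero]
  · rw [if_neg hjs, if_neg (by omega)]

end Coefficients

section Substitution

variable {σ τ : Type*} [Fintype σ] [DecidableEq σ] [Fintype τ] [DecidableEq τ]

lemma coeff_pssubst (a : σ → MvPowerSeries τ ℂ) (f : MvPowerSeries σ ℂ) (μ : τ →₀ ℕ) :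
    coeff μ (pssubst a f) = ∑ d ∈ Finset.Iic (Finsupp.equivFunOnFinite.symm fun _ => deg μ),
      coeff d f * coeff μ (∏ i, a i ^ d i) := rfl

lemma coeff_pssubst_eq_zero {a : σ → MvPowerSeries τ ℂ} {f : MvPowerSeries σ ℂ} {μ : τ →₀ ℕ}
    (h : ∀ d, coeff d f ≠ 0 → coeff μ (∏ i, a i ^ d i) = 0) : coeff μ (pssubst a f) = 0 := by
  refine Finset.sum_eq_zero fun d _ => ?_
  by_cases hd : coeff d f = 0
  · rw [hd, zero_mul]
  · rw [h d hd, mul_zero]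

lemma coeff_pssubst_congr {a b : σ → MvPowerSeries τ ℂ} {f : MvPowerSeries σ ℂ} {μ : τ →₀ ℕ}
    (h : ∀ d : σ →₀ ℕ, coeff μ (∏ i, a i ^ d i) = coeff μ (∏ i, b i ^ d i)) :
    coeff μ (pssubst a f) = coeff μ (pssubst b f) :=
  Finset.sum_congr rfl fun d _ => by rw [h d]

lemma coeff_pssubst_X_comp_eq_zero (φ : σ → τ) {f : MvPowerSeries σ ℂ} {μ : τ →₀ ℕ}
    (h : ∀ d, d.mapDomain φ = μ → coeff d f = 0) :
    coeff μ (pssubst (fun i => X (φ i)) f) = 0 := by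
  refine coeff_pssubst_eq_zero fun d hd => ?_
  rw [prod_X_comp_pow, coeff_monomial, if_neg]
  exact fun hμ => hd (h d hμ.symm)

lemma coeff_pssubst_X_comp_mapDomain {φ : σ → τ} (hφ : φ.Injective) (f : MvPowerSeries σ ℂ)
    (d : σ →₀ ℕ) : coeff (d.mapDomain φ) (pssubst (fun i => X (φ i)) f) = coeff d f := by
  have hmem : d ∈ Finset.Iic (Finsupp.equivFunOnFinite.symm fun _ => deg (d.mapDomain φ)) := by
    rw [Finset.mem_Iic]
    intro i
    exact ((Finsupp.mapDomain_apply hφ d i).symm.le.trans (Finsupp.le_degree (φ i) _) :)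
  rw [coeff_pssubst, Finset.sum_eq_single_of_mem d hmem, prod_X_comp_pow, coeff_monomial_same,
    mul_one]
  intro d' _ hd'
  rw [prod_X_comp_pow, coeff_monomial,
    if_neg fun h => hd' (Finsupp.mapDomain_injective hφ h.symm), mul_zero]

lemma le_weightedOrder_pssubst_X_comp (φ : σ → τ) (ω : τ → ℕ) (f : MvPowerSeries σ ℂ) :
    f.weightedOrder (ω ∘ φ) ≤ (pssubst (fun i => X (φ i)) f).weightedOrder ω := by
  refine le_weightedOrder ω fun μ hμ => coeff_pssubst_X_comp_eq_zero φ fun d hd => ?_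
  rw [← hd, weight_mapDomain] at hμ
  exact coeff_eq_zero_of_lt_weightedOrder _ hμ

lemma coeff_pssubst_X_add_X_pow_mul_eq_zero (t : σ) {A : σ → MvPowerSeries τ ℂ}
    {Q' : MvPowerSeries σ ℂ} {m' : ℕ} {μ : τ →₀ ℕ} (hlin : coeff μ (A t) = 0)
    (h : ∀ D, coeff D Q' ≠ 0 → coeff μ (∏ v, A v ^ (D + Finsupp.single t m') v) = 0) :
    coeff μ (pssubst A (X t + X t ^ m' * Q')) = 0 := by
  refine coeff_pssubst_eq_zero fun D hD => ?_
  by_cases hD1 : D = Finsupp.single t 1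
  · rwa [hD1, Fintype.prod_eq_single t fun v hv => by rw [Finsupp.single_eq_of_ne hv, pow_zero],
      Finsupp.single_eq_same, pow_one]
  rw [map_add, coeff_X, if_neg hD1, zero_add, X_pow_eq, coeff_monomial_mul, one_mul] at hD
  split_ifs at hD with hle
  · rw [← tsub_add_cancel_of_le hle]
    exact h _ hD
  · exact absurd rfl hD

end Substitution

variable {n : ℕ}

def zτ : Wv n → Vv n := Sum.elim Sum.inl fun _ => tv n

def χτ : Wv n → Vv n := Sum.elim (Sum.inr ∘ Sum.inl) fun _ => tv n

lemma zτ_injective : (zτ (n := n)).Injective := by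
  rintro (i | u) (j | u') h <;> simp_all [zτ, tv]

lemma sLHS_X : sLHS (X (tv n)) = fun v => X (zτ v) := by
  funext v
  rcases v with i | u <;> rfl

lemma sBar_eq : (sBar : Wv n → MvPowerSeries (Vv n) ℂ) = fun v => X (χτ v) := by
  funext v
  rcases v with i | u <;> rfl

def vWeight (a b c : ℕ) : Vv n → ℕ := Sum.elim (fun _ => a) (Sum.elim (fun _ => b) fun _ => c)

lemma vWeight_tv (a b c : ℕ) : vWeight a b c (tv n) = c := rfl

def wWeight (a c : ℕ) : Wv n → ℕ := Sum.elim (fun _ => a) fun _ => c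

lemma weight_vWeight (a b c : ℕ) (μ : Vv n →₀ ℕ) :
    weight (vWeight a b c) μ
      = a * ∑ i, μ (.inl i) + b * ∑ i, μ (.inr (.inl i)) + c * μ (tv n) := by
  simp [weight_eq_sum, Fintype.sum_sum_type, vWeight, tv, Finset.mul_sum, mul_comm, add_assoc]

lemma weight_wWeight (a c : ℕ) (d : Wv n →₀ ℕ) :
    weight (wWeight a c) d = a * ∑ i, d (.inl i) + c * d (.inr ()) := by
  simp [weight_eq_sum, Fintype.sum_sum_type, wWeight, Finset.mul_sum, mul_comm]

lemma vWeight_comp_zτ (a b c : ℕ) : vWeight (n := n) a b c ∘ zτ = wWeight a c := by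
  funext v
  rcases v with i | u <;> rfl

lemma vWeight_comp_χτ (a b c : ℕ) : vWeight (n := n) a b c ∘ χτ = wWeight b c := by
  funext v
  rcases v with i | u <;> rfl

lemma eq_single_of_forall_inl_eq_zero {d : Wv n →₀ ℕ} (h : ∀ i, d (.inl i) = 0) :
    d = Finsupp.single (.inr ()) (d (.inr ())) := by
  ext (i | u)
  · simp [h i]
  · simp

lemma le_weightedOrder_wWeight {R : Type*} [Semiring R] {f : MvPowerSeries (Wv n) R} {s K : ℕ}
    (hsK : s ≤ K) (h : ∀ k < s, coeff (Finsupp.single (.inr ()) k) f = 0) :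
    (s : ℕ∞) ≤ f.weightedOrder (wWeight K 1) := by
  refine nat_le_weightedOrder _ fun d hd => ?_
  rw [weight_wWeight] at hd
  have hz : ∀ i, d (.inl i) = 0 := by
    have : ∑ i, d (.inl i) = 0 := by
      by_contra h0
      have := Nat.mul_le_mul_left K (Nat.one_le_iff_ne_zero.mpr h0)
      omega
    simpa using this
  rw [eq_single_of_forall_inl_eq_zero hz]
  exact h _ (by omega)

lemma one_le_weightedOrder_of_forall_χ_eq_zero {f : MvPowerSeries (Vv n) ℂ}
    (h : ∀ d : Vv n →₀ ℕ, (∀ i, d (.inr (.inl i)) = 0) → coeff d f = 0) :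
    1 ≤ f.weightedOrder (vWeight 0 1 0) :=
  nat_le_weightedOrder _ fun d hd => h d (by simpa [weight_vWeight] using hd)

lemma le_weightedOrder_conj_sBar (ω : Vv n → ℕ) (f : MvPowerSeries (Wv n) ℂ) :
    f.weightedOrder (ω ∘ χτ) ≤ (pssubst sBar (psconj f)).weightedOrder ω := by
  rw [sBar_eq]
  exact (le_weightedOrder_map _ _).trans (le_weightedOrder_pssubst_X_comp χτ ω _)

lemma coeff_pssubst_sBar_of_ne_zero {μ : Vv n →₀ ℕ} {i : Fin n} (hμ : μ (.inl i) ≠ 0)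
    (f : MvPowerSeries (Wv n) ℂ) : coeff μ (pssubst sBar f) = 0 := by
  rw [sBar_eq]
  refine coeff_pssubst_X_comp_eq_zero χτ fun d hd => absurd ?_ hμ
  rw [← hd, Finsupp.mapDomain_of_notMem_range]
  rintro ⟨j | u, hj⟩ <;> simp [χτ, tv] at hj

lemma prod_sLHS_pow (Q : MvPowerSeries (Vv n) ℂ) (d : Wv n →₀ ℕ) :
    ∏ v, sLHS Q v ^ d v = (∏ i, X (.inl i) ^ d (.inl i)) * Q ^ d (.inr ()) := by
  rw [Fintype.prod_sum_type]
  congr 1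
  exact Fintype.prod_unique _

/-- `hQ` says `Q ≡ τ` modulo `χ`, so on `χ`-free exponents the substitution `w = Q` acts as the
renaming `w ↦ τ`. -/
lemma coeff_pssubst_sLHS_mapDomain_zτ {Q : MvPowerSeries (Vv n) ℂ}
    (hQ : 1 ≤ (Q - X (tv n)).weightedOrder (vWeight 0 1 0)) (f : MvPowerSeries (Wv n) ℂ)
    (d : Wv n →₀ ℕ) : coeff (d.mapDomain zτ) (pssubst (sLHS Q) f) = coeff d f := by
  rw [coeff_pssubst_congr (b := sLHS (X (tv n))), sLHS_X,
    coeff_pssubst_X_comp_mapDomain zτ_injective]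
  intro d'
  obtain ⟨c, hc⟩ := sub_dvd_pow_sub_pow Q (X (tv n)) (d' (.inr ()))
  rw [← sub_eq_zero, ← map_sub, prod_sLHS_pow, prod_sLHS_pow, ← mul_sub, hc]
  refine coeff_eq_zero_of_lt_weightedOrder _
    (lt_of_lt_of_le ?_ (le_weightedOrder_mul (vWeight 0 1 0)))
  rw [weight_mapDomain, vWeight_comp_zτ, weight_wWeight]
  calc ((0 * _ + 0 * _ : ℕ) : ℕ∞) < 1 := by simp
    _ ≤ _ := hQ.trans (le_self_add.trans (le_weightedOrder_mul (vWeight 0 1 0)))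
    _ ≤ _ := le_add_self

lemma coeff_pssubst_sLHS_X_add_X_pow_mul {m s : ℕ} (hm : 2 ≤ m) {Qt : MvPowerSeries (Vv n) ℂ}
    {G : MvPowerSeries (Wv n) ℂ} {d₀ : Vv n →₀ ℕ} (hd₀ : d₀ ≠ 0) (hd₀τ : d₀ (tv n) = 0)
    (h_lt : ∀ d : Wv n →₀ ℕ, d (.inr ()) < s → coeff d G = 0)
    (h_z : ∀ d : Wv n →₀ ℕ, (∃ i, d (.inl i) ≠ 0) → d (.inr ()) ≤ m + s - 1 → coeff d G = 0) :
    coeff (d₀ + Finsupp.single (tv n) (m + s - 1))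
        (pssubst (sLHS (X (tv n) + X (tv n) ^ m * Qt)) G)
      = coeff (Finsupp.single (.inr ()) s) G * (s * coeff d₀ Qt) := by
  set Q := X (tv n) + X (tv n) ^ m * Qt
  have hQ : 1 ≤ Q.weightedOrder (vWeight 0 0 1) := by
    refine nat_le_weightedOrder _ fun d hd => ?_
    have hdτ : d (tv n) = 0 := by simpa [weight_vWeight] using hd
    rw [map_add, coeff_X, if_neg fun h => by simp [h] at hdτ, X_pow_eq, coeff_monomial_mul,
      if_neg (by rw [Finsupp.single_le_iff, hdτ]; omega), add_zero]
  have hmem : (Finsupp.single (.inr ()) s : Wv n →₀ ℕ) ∈ Finset.Iic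
      (Finsupp.equivFunOnFinite.symm fun _ => deg (d₀ + Finsupp.single (tv n) (m + s - 1))) := by
    rw [Finset.mem_Iic]
    intro v
    calc (Finsupp.single (.inr ()) s : Wv n →₀ ℕ) v ≤ s := by
          rw [Finsupp.single_apply]; split_ifs <;> omega
      _ ≤ (d₀ + Finsupp.single (tv n) (m + s - 1)) (tv n) := by
          rw [Finsupp.add_apply, hd₀τ, Finsupp.single_eq_same]; omega
      _ ≤ _ := Finsupp.le_degree _ _
  have hsingle (j : ℕ) : ∏ v, sLHS Q v ^ (Finsupp.single (.inr ()) j) v = Q ^ j := by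
    rw [prod_sLHS_pow]
    simp
  rw [coeff_pssubst, Finset.sum_eq_single_of_mem _ hmem, hsingle,
    coeff_X_add_X_pow_mul_pow (tv n) Qt hm le_rfl hd₀ hd₀τ, if_pos rfl]
  intro d _ hd
  by_cases hg : coeff d G = 0
  · rw [hg, zero_mul]
  by_cases hz : ∃ i, d (.inl i) ≠ 0
  · have hτ : m + s - 1 < d (.inr ()) := by
      by_contra! h
      exact hg (h_z d hz h)
    rw [coeff_prod_pow_eq_zero_of_weight_lt (vWeight 0 0 1) (wWeight 0 1) ?_ ?_, mul_zero]
    · rintro (i | u)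
      · simp [wWeight]
      · exact hQ
    · simpa [weight_vWeight, weight_wWeight, hd₀τ] using hτ
  · push Not at hz
    have hsj : s ≤ d (.inr ()) := by
      by_contra! h
      exact hg (h_lt d h)
    rw [eq_single_of_forall_inl_eq_zero hz] at hd ⊢
    rw [hsingle, coeff_X_add_X_pow_mul_pow (tv n) Qt hm hsj hd₀ hd₀τ,
      if_neg fun h => hd (by rw [h]), mul_zero]

def sRHS (Q : MvPowerSeries (Vv n) ℂ) (F : Fin n → MvPowerSeries (Wv n) ℂ)
    (G : MvPowerSeries (Wv n) ℂ) : Vv n → MvPowerSeries (Vv n) ℂ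
  | .inl i => pssubst (sLHS Q) (F i)
  | .inr (.inl i) => pssubst sBar (psconj (F i))
  | .inr (.inr _) => pssubst sBar (psconj G)

lemma SendsInto.eq_sRHS {Q Q' : MvPowerSeries (Vv n) ℂ} {F : Fin n → MvPowerSeries (Wv n) ℂ}
    {G : MvPowerSeries (Wv n) ℂ} (h : SendsInto Q Q' F G) :
    pssubst (sLHS Q) G = pssubst (sRHS Q F G) Q' := h

section Map

variable {m m' : ℕ} {Qt Qt' : MvPowerSeries (Vv n) ℂ} {F : Fin n → MvPowerSeries (Wv n) ℂ}
  {G : MvPowerSeries (Wv n) ℂ}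

/-- The weight `m' s + 1` on `χ` exceeds every weight that matters, so that `Ḡ` has order `≥ s`
as soon as `G(0, w) = O(w^s)`, while each `F̄ⱼ` still has order `≥ 1`. -/
lemma SendsInto.coeff_eq_zero_of_le_mul
    (hmap : SendsInto (X (tv n) + X (tv n) ^ m * Qt) (X (tv n) + X (tv n) ^ m' * Qt') F G)
    (hQt : ∀ d : Vv n →₀ ℕ, (∀ i, d (.inr (.inl i)) = 0) → coeff d Qt = 0)
    (hQt' : ∀ d : Vv n →₀ ℕ, (∀ i, d (.inr (.inl i)) = 0) → coeff d Qt' = 0)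
    (hF : ∀ i, constantCoeff (F i) = 0) (hm' : 1 ≤ m') {s : ℕ}
    (hmin : ∀ k < s, coeff (Finsupp.single (.inr ()) k) G = 0) {d : Wv n →₀ ℕ}
    (hz : ∃ i, d (.inl i) ≠ 0) (hd : d (.inr ()) ≤ m' * s) : coeff d G = 0 := by
  obtain ⟨i, hi⟩ := hz
  have hQ : 1 ≤ (X (tv n) + X (tv n) ^ m * Qt - X (tv n)).weightedOrder (vWeight 0 1 0) := by
    rw [add_sub_cancel_left]
    exact (one_le_weightedOrder_of_forall_χ_eq_zero hQt).trans
      (le_add_self.trans (le_weightedOrder_mul _))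
  rw [← coeff_pssubst_sLHS_mapDomain_zτ hQ G d, hmap.eq_sRHS]
  refine coeff_pssubst_X_add_X_pow_mul_eq_zero (tv n) (coeff_pssubst_sBar_of_ne_zero (i := i)
    (by rwa [← Finsupp.mapDomain_apply zτ_injective d (.inl i)] at hi) _) fun D hD => ?_
  obtain ⟨j, hj⟩ : ∃ j, D (.inr (.inl j)) ≠ 0 := by
    by_contra! h
    exact hD (hQt' D h)
  have hχ : 1 ≤ ∑ j, D (.inr (.inl j)) :=
    (Nat.one_le_iff_ne_zero.mpr hj).trans (Finset.single_le_sum (f := fun j => D (.inr (.inl j)))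
      (fun _ _ => Nat.zero_le _) (Finset.mem_univ j))
  apply coeff_prod_pow_eq_zero_of_weight_lt (vWeight 0 (m' * s + 1) 1) (vWeight 0 1 s)
  · rintro (i | i | u)
    · simp [vWeight]
    · show ((1 : ℕ) : ℕ∞) ≤ _
      refine le_trans ?_ (le_weightedOrder_conj_sBar _ _)
      rw [vWeight_comp_χτ]
      exact le_weightedOrder_wWeight (by omega) fun k hk => by
        rw [Nat.lt_one_iff.mp hk, Finsupp.single_zero, coeff_zero_eq_constantCoeff, hF]
    · show (s : ℕ∞) ≤ _
      refine le_trans ?_ (le_weightedOrder_conj_sBar _ _)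
      rw [vWeight_comp_χτ]
      exact le_weightedOrder_wWeight (by nlinarith) hmin
  · rw [weight_mapDomain, vWeight_comp_zτ, weight_wWeight, map_add, Finsupp.weight_single,
      weight_vWeight, vWeight_tv, smul_eq_mul]
    nlinarith

lemma SendsInto.eq_zero_of_coeff_single_eq_zero
    (hmap : SendsInto (X (tv n) + X (tv n) ^ m * Qt) (X (tv n) + X (tv n) ^ m' * Qt') F G)
    (hQt : ∀ d : Vv n →₀ ℕ, (∀ i, d (.inr (.inl i)) = 0) → coeff d Qt = 0)
    (hQt' : ∀ d : Vv n →₀ ℕ, (∀ i, d (.inr (.inl i)) = 0) → coeff d Qt' = 0)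
    (hF : ∀ i, constantCoeff (F i) = 0) (hm' : 1 ≤ m')
    (hG : ∀ k, coeff (Finsupp.single (.inr ()) k) G = 0) : G = 0 := by
  ext d
  by_cases hz : ∃ i, d (.inl i) ≠ 0
  · exact hmap.coeff_eq_zero_of_le_mul hQt hQt' hF hm' (fun k _ => hG k) hz
      (Nat.le_mul_of_pos_left _ hm')
  · push Not at hz
    rw [eq_single_of_forall_inl_eq_zero hz, hG, map_zero]

/-- The inequality `(m' - 1) trord H ≤ m - 1`: by `hs` and `hmin`, `s` is the transversal order
of `H = (F, G)`. -/
lemma SendsInto.pred_mul_le_pred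
    (hmap : SendsInto (X (tv n) + X (tv n) ^ m * Qt) (X (tv n) + X (tv n) ^ m' * Qt') F G)
    (hQt : ∀ d : Vv n →₀ ℕ, (∀ i, d (.inr (.inl i)) = 0) → coeff d Qt = 0)
    (hQt' : ∀ d : Vv n →₀ ℕ, (∀ i, d (.inr (.inl i)) = 0) → coeff d Qt' = 0)
    (hF : ∀ i, constantCoeff (F i) = 0)
    (hQtz : ∀ d : Vv n →₀ ℕ, (∀ i, d (.inl i) = 0) → coeff d Qt = 0)
    (hQt_ne : ∃ d : Vv n →₀ ℕ, d (tv n) = 0 ∧ coeff d Qt ≠ 0) (hm : 2 ≤ m) {s : ℕ}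
    (hs : coeff (Finsupp.single (.inr ()) s) G ≠ 0)
    (hmin : ∀ k < s, coeff (Finsupp.single (.inr ()) k) G = 0) :
    (m' - 1) * s ≤ m - 1 := by
  by_contra! hlt
  have hm' : 1 ≤ m' := by
    by_contra! h
    simp [Nat.lt_one_iff.mp h] at hlt
  have hs1 : 1 ≤ s := by
    by_contra! h
    simp [Nat.lt_one_iff.mp h] at hlt
  have hK : m + s - 1 < m' * s := by
    have := Nat.sub_one_mul m' s
    have : s ≤ m' * s := Nat.le_mul_of_pos_left s hm'
    omega
  have h_z : ∀ d : Wv n →₀ ℕ, (∃ i, d (.inl i) ≠ 0) → d (.inr ()) ≤ m' * s → coeff d G = 0 :=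
    fun d => hmap.coeff_eq_zero_of_le_mul hQt hQt' hF hm' hmin
  have h_lt : ∀ d : Wv n →₀ ℕ, d (.inr ()) < s → coeff d G = 0 := by
    intro d hd
    by_cases hz : ∃ i, d (.inl i) ≠ 0
    · exact h_z d hz (hd.le.trans (Nat.le_mul_of_pos_left s hm'))
    · push Not at hz
      rw [eq_single_of_forall_inl_eq_zero hz]
      exact hmin _ hd
  obtain ⟨d₀, hd₀τ, hd₀⟩ := hQt_ne
  obtain ⟨i, hi⟩ : ∃ i, d₀ (.inl i) ≠ 0 := by
    by_contra! h
    exact hd₀ (hQtz d₀ h)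
  have hL := coeff_pssubst_sLHS_X_add_X_pow_mul hm (Qt := Qt)
    (by rintro rfl; exact hi rfl) hd₀τ h_lt fun d hz hd => h_z d hz (by omega)
  have hR : coeff (d₀ + Finsupp.single (tv n) (m + s - 1))
      (pssubst (sRHS (X (tv n) + X (tv n) ^ m * Qt) F G) (X (tv n) + X (tv n) ^ m' * Qt')) = 0 := by
    refine coeff_pssubst_X_add_X_pow_mul_eq_zero (tv n)
      (coeff_pssubst_sBar_of_ne_zero (i := i) (by simpa [tv] using hi) _) fun D _ => ?_
    apply coeff_prod_pow_eq_zero_of_weight_lt (vWeight 0 0 1) (vWeight 0 0 s)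
    · rintro (i | i | u)
      · simp [vWeight]
      · simp [vWeight]
      · show (s : ℕ∞) ≤ _
        refine le_trans ?_ (le_weightedOrder_conj_sBar _ _)
        rw [vWeight_comp_χτ]
        exact nat_le_weightedOrder _ fun d hd => h_lt d (by simpa [weight_wWeight] using hd)
    · rw [map_add, map_add, Finsupp.weight_single, Finsupp.weight_single, weight_vWeight,
        weight_vWeight, vWeight_tv, vWeight_tv, hd₀τ, smul_eq_mul, smul_eq_mul]
      nlinarith
  rw [hmap.eq_sRHS, hR] at hL
  exact mul_ne_zero hs (mul_ne_zero (Nat.cast_ne_zero.mpr (by omega)) hd₀) hL.symm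

end Map

theorem stmt_6_general (n m m' : ℕ) (hm'm : m' ≤ m) (hm2 : m < 2 * m' - 1)
    (Qt Qt' : MvPowerSeries (Vv n) ℂ)
(hQtz0 : ∀ d : Vv n →₀ ℕ, (∀ i, d (Sum.inr (Sum.inl i)) = 0) → MvPowerSeries.coeff d Qt = 0)
    (hQtχ0 : ∀ d : Vv n →₀ ℕ, (∀ i, d (Sum.inl i) = 0) → MvPowerSeries.coeff d Qt = 0)
    (hQtnt : ∃ d : Vv n →₀ ℕ, d (tv n) = 0 ∧ MvPowerSeries.coeff d Qt ≠ 0)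
(hQt'z0 : ∀ d : Vv n →₀ ℕ, (∀ i, d (Sum.inr (Sum.inl i)) = 0) → MvPowerSeries.coeff d Qt' = 0)
(F : Fin n → MvPowerSeries (Wv n) ℂ) (G : MvPowerSeries (Wv n) ℂ)
    (hF0 : ∀ i, MvPowerSeries.constantCoeff (F i) = 0)
    (hG0 : MvPowerSeries.constantCoeff G = 0)
    (hmap : SendsInto (MvPowerSeries.X (tv n) + (MvPowerSeries.X (tv n)) ^ m * Qt)
      (MvPowerSeries.X (tv n) + (MvPowerSeries.X (tv n)) ^ m' * Qt') F G) :
    MvPowerSeries.coeff (Finsupp.single (Sum.inr ()) 1) G ≠ 0 ∨ G = 0 := by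
  by_cases hex : ∃ k, coeff (Finsupp.single (.inr ()) k) G ≠ 0
  · left
    have hs := Nat.find_spec hex
    have hle := hmap.pred_mul_le_pred hQtz0 hQt'z0 hF0 hQtχ0 hQtnt (by omega) hs
      fun k hk => not_not.mp (Nat.find_min hex hk)
    have hs0 : Nat.find hex ≠ 0 := fun h => hs (by
      rw [h, Finsupp.single_zero, coeff_zero_eq_constantCoeff, hG0])
    have hs2 : ¬ 2 ≤ Nat.find hex := fun h => by
      have := Nat.mul_le_mul_left (m' - 1) h
      omega
    rwa [show Nat.find hex = 1 by omega] at hs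
  · push Not at hex
    exact Or.inr (hmap.eq_zero_of_coeff_single_eq_zero hQtz0 hQt'z0 hF0 (by omega) hex)

/-- Corollary (nomaps): if 1 < m' ≤ m and m < 2m'-1, every formal map sending the
m-infinite type M into the m'-infinite type M' is either CR-transversal or
transversally flat. -/
theorem stmt_6 (n m m' : ℕ) (hm'1 : 1 < m') (hm'm : m' ≤ m) (hm2 : m < 2 * m' - 1)
    (Qt Qt' : MvPowerSeries (Vv n) ℂ)
(hQtz0 : ∀ d : Vv n →₀ ℕ, (∀ i, d (Sum.inr (Sum.inl i)) = 0) → MvPowerSeries.coeff d Qt = 0)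
    (hQtχ0 : ∀ d : Vv n →₀ ℕ, (∀ i, d (Sum.inl i) = 0) → MvPowerSeries.coeff d Qt = 0)
    (hQtnt : ∃ d : Vv n →₀ ℕ, d (tv n) = 0 ∧ MvPowerSeries.coeff d Qt ≠ 0)
(hQt'z0 : ∀ d : Vv n →₀ ℕ, (∀ i, d (Sum.inr (Sum.inl i)) = 0) → MvPowerSeries.coeff d Qt' = 0)
    (hQt'χ0 : ∀ d : Vv n →₀ ℕ, (∀ i, d (Sum.inl i) = 0) → MvPowerSeries.coeff d Qt' = 0)
    (hQt'nt : ∃ d : Vv n →₀ ℕ, d (tv n) = 0 ∧ MvPowerSeries.coeff d Qt' ≠ 0)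
(F : Fin n → MvPowerSeries (Wv n) ℂ) (G : MvPowerSeries (Wv n) ℂ)
    (hF0 : ∀ i, MvPowerSeries.constantCoeff (F i) = 0)
    (hG0 : MvPowerSeries.constantCoeff G = 0)
    (hmap : SendsInto (MvPowerSeries.X (tv n) + (MvPowerSeries.X (tv n)) ^ m * Qt)
      (MvPowerSeries.X (tv n) + (MvPowerSeries.X (tv n)) ^ m' * Qt') F G) :
    MvPowerSeries.coeff (Finsupp.single (Sum.inr ()) 1) G ≠ 0 ∨ G = 0 :=
  stmt_6_general n m m' hm'm hm2 Qt Qt' hQtz0 hQtχ0 hQtnt hQt'z0 F G hF0 hG0 hmap
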